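/- arXiv:1807.01184 — 3 statements merged into one kernel-verified Lean document; each statement's English description precedes it below -/
import Mathlib

section
/- Let $N\in\mathbb{N}$, let $0<p_j\le u_j<\infty$ for $j=1,\dots,N$, and let $\lambda^{(j)}=\{\lambda^{(j)}_k\}_{k\in\mathbb{Z}^d}\in m_{u_j,p_j}(\mathbb{Z}^d)$ for $j=1,\dots,N$. Define $u$ by $1/u=\sum_{j=1}^N 1/u_j$ and let $0<p\le u$ satisfy $1/p\ge \sum_{j=1}^N 1/p_j$. Then the coordinatewise product $\lambda^{(1)}\cdots\lambda^{(N)}=\{\lambda^{(1)}_k\cdots\lambda^{(N)}_k\}_{k\in\mathbb{Z}^d}$ belongs to $m_{u,p}(\mathbb{Z}^d)$ and $\|\lambda^{(1)}\cdots\lambda^{(N)}\,|\,m_{u,p}\| \le \|\lambda^{(1)}\,|\,m_{u_1,p_1}\|\cdots\|\lambda^{(N)}\,|\,m_{u_N,p_N}\|$. -/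
open scoped ENNReal NNReal BigOperators
open Filter

/-- The unit cube `Q_{0,k}` is contained in the dyadic cube `Q_{-j,m}` of side length `2^j`. -/
def inDyadic (d j : ℕ) (m k : Fin d → ℤ) : Prop :=
  ∀ i, 2 ^ j * m i ≤ k i ∧ k i < 2 ^ j * (m i + 1)

/-- The Morrey sequence space quasi-norm `‖λ | m_{u,p}(ℤ^d)‖`, with values in `ℝ≥0∞`. -/
noncomputable def morreyNorm (d : ℕ) (u p : ℝ) (lam : (Fin d → ℤ) → ℂ) : ℝ≥0∞ :=
  ⨆ (j : ℕ) (m : Fin d → ℤ),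
    ((2 : ℝ≥0∞) ^ (j * d)) ^ (1 / u - 1 / p) *
      (∑' k : {k : Fin d → ℤ // inDyadic d j m k}, (‖lam k.1‖₊ : ℝ≥0∞) ^ p) ^ (1 / p)

/-- The `ℓ_r(ℤ^d)` norm. -/
noncomputable def lpNorm (d : ℕ) (r : ℝ) (lam : (Fin d → ℤ) → ℂ) : ℝ≥0∞ :=
  (∑' k : Fin d → ℤ, (‖lam k‖₊ : ℝ≥0∞) ^ r) ^ (1 / r)

/-- The `ℓ_∞(ℤ^d)` norm. -/
noncomputable def lInftyNorm (d : ℕ) (lam : (Fin d → ℤ) → ℂ) : ℝ≥0∞ :=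
  ⨆ k : Fin d → ℤ, (‖lam k‖₊ : ℝ≥0∞)

/-- The weak Lorentz `ℓ_{u,∞}(ℤ^d)` norm, via the distribution function. -/
noncomputable def weakNorm (d : ℕ) (u : ℝ) (lam : (Fin d → ℤ) → ℂ) : ℝ≥0∞ :=
  ⨆ t : ℝ≥0, (t : ℝ≥0∞) *
    (∑' _ : {k : Fin d → ℤ // (t : ℝ) < ‖lam k‖}, (1 : ℝ≥0∞)) ^ (1 / u)

/-- The norm of the level-`j` space `X^{(j)}_{u,p}(ℤ^d)`. -/
noncomputable def XjNorm (d : ℕ) (u p p' : ℝ) (j : ℕ) (lam : (Fin d → ℤ) → ℂ) : ℝ≥0∞ :=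
  ((2 : ℝ≥0∞) ^ (j * d)) ^ (1 / p - 1 / u) *
    ∑' m : Fin d → ℤ,
      (∑' k : {k : Fin d → ℤ // inDyadic d j m k}, (‖lam k.1‖₊ : ℝ≥0∞) ^ p') ^ (1 / p')

/-- The norm of `X_{u,p}(ℤ^d)`: infimum over decompositions `λ = ∑_j λ^{(j)}`. -/
noncomputable def XupNorm (d : ℕ) (u p p' : ℝ) (lam : (Fin d → ℤ) → ℂ) : ℝ≥0∞ :=
  ⨅ (L : ℕ → (Fin d → ℤ) → ℂ) (_ : ∀ k, HasSum (fun j => L j k) (lam k)),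
    ∑' j : ℕ, XjNorm d u p p' j (L j)

/-- Membership in `m_{u,p}(ℤ^d)`. -/
def MemMorrey (d : ℕ) (u p : ℝ) (lam : (Fin d → ℤ) → ℂ) : Prop :=
  morreyNorm d u p lam ≠ ⊤

/-- Membership in `m^{00}_{u,p}(ℤ^d)`, the closure of the finitely supported sequences. -/
def MemMorrey00 (d : ℕ) (u p : ℝ) (lam : (Fin d → ℤ) → ℂ) : Prop :=
  MemMorrey d u p lam ∧
    ∀ ε : ℝ≥0∞, 0 < ε → ∃ mu : (Fin d → ℤ) → ℂ,
      (Function.support mu).Finite ∧ morreyNorm d u p (lam - mu) < ε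

/-- `Q_{-ν,m} ⊆ Q_{-j,0}` for dyadic cubes. -/
def subCube (d j ν : ℕ) (m : Fin d → ℤ) : Prop :=
  ν ≤ j ∧ ∀ i, 0 ≤ m i ∧ 2 ^ ν * (m i + 1) ≤ 2 ^ j

/-- Norm of the finite-dimensional Morrey space `m^{2^{jd}}_{u,p}` on the cube `Q_{-j,0}`. -/
noncomputable def finMorreyNorm (d : ℕ) (u p : ℝ) (j : ℕ) (lam : (Fin d → ℤ) → ℂ) : ℝ≥0∞ :=
  ⨆ (ν : ℕ) (m : Fin d → ℤ) (_ : subCube d j ν m),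
    ((2 : ℝ≥0∞) ^ (ν * d)) ^ (1 / u - 1 / p) *
      (∑' k : {k : Fin d → ℤ // inDyadic d ν m k}, (‖lam k.1‖₊ : ℝ≥0∞) ^ p) ^ (1 / p)

/-- Operator norm of `id_j : m^{2^{jd}}_{u₁,p₁} → m^{2^{jd}}_{u₂,p₂}`. -/
noncomputable def morreyOpNorm (d : ℕ) (u₁ p₁ u₂ p₂ : ℝ) (j : ℕ) : ℝ≥0∞ :=
  ⨆ (lam : (Fin d → ℤ) → ℂ) (_ : finMorreyNorm d u₁ p₁ j lam ≤ 1),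
    finMorreyNorm d u₂ p₂ j lam

/-- Finitary Hölder inequality for `tsum` in `ℝ≥0∞` over a countable type. -/
lemma tsum_prod_rpow_le {X ι : Type*} [Countable X] [MeasurableSpace X]
    [MeasurableSingletonClass X] (s : Finset ι) (f : ι → X → ℝ≥0∞) {e : ι → ℝ}
    (hp : ∑ i ∈ s, e i = 1) (h2p : ∀ i ∈ s, 0 ≤ e i) :
    ∑' x, ∏ i ∈ s, f i x ^ e i ≤ ∏ i ∈ s, (∑' x, f i x) ^ e i := by
  have := ENNReal.lintegral_prod_norm_pow_le (μ := MeasureTheory.Measure.count) s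
    (f := f) (fun i _ => (measurable_of_countable _).aemeasurable) hp h2p
  simpa [MeasureTheory.lintegral_count] using this

/-- The dyadic cube `Q_{-j,m}` contains at most `2^{jd}` lattice points. -/
lemma tsum_one_inDyadic_le (d j : ℕ) (m : Fin d → ℤ) :
    ∑' _ : {k : Fin d → ℤ // inDyadic d j m k}, (1 : ℝ≥0∞) ≤ (2 : ℝ≥0∞) ^ (j * d) := by
  have h2j : ((2 ^ j : ℕ) : ℤ) = 2 ^ j := by push_cast; ring
  have hlt : ∀ (k : {k : Fin d → ℤ // inDyadic d j m k}) (i : Fin d),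
      ((k.1 i - 2 ^ j * m i).toNat) < 2 ^ j := by
    intro k i
    have h1 := (k.2 i).1
    have h2 := (k.2 i).2
    have hn : (2 : ℤ) ^ j * (m i + 1) = 2 ^ j * m i + 2 ^ j := by ring
    rw [hn] at h2
    omega
  have hinj : Function.Injective
      (fun (k : {k : Fin d → ℤ // inDyadic d j m k}) (i : Fin d) =>
        (⟨(k.1 i - 2 ^ j * m i).toNat, hlt k i⟩ : Fin (2 ^ j))) := by
    intro a b hab
    apply Subtype.ext
    funext i
    have h := congrFun hab i
    simp only [Fin.mk.injEq] at h
    have h1a := (a.2 i).1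
    have h1b := (b.2 i).1
    omega
  calc ∑' _ : {k : Fin d → ℤ // inDyadic d j m k}, (1 : ℝ≥0∞)
      ≤ ∑' _ : Fin d → Fin (2 ^ j), (1 : ℝ≥0∞) :=
        ENNReal.tsum_comp_le_tsum_of_injective hinj (fun _ => 1)
    _ = ((2 ^ j) ^ d : ℕ) := by
        rw [tsum_fintype]
        simp [Fintype.card_fun]
    _ = (2 : ℝ≥0∞) ^ (j * d) := by push_cast; rw [pow_mul]

/-- `x ^ (∑ f) = ∏ x ^ f i` for `x ≠ 0, ⊤`. -/
lemma ennreal_rpow_sum {ι : Type*} {x : ℝ≥0∞} (hx : x ≠ 0) (hx' : x ≠ ⊤)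
    (s : Finset ι) (f : ι → ℝ) : x ^ (∑ i ∈ s, f i) = ∏ i ∈ s, x ^ f i := by
  induction s using Finset.cons_induction with
  | empty => simp
  | cons a s ha ih =>
    rw [Finset.sum_cons, Finset.prod_cons, ENNReal.rpow_add _ _ hx hx', ih]

theorem morrey_product (d N : ℕ) (hN : 0 < N) (uu pp : Fin N → ℝ)
    (hpp : ∀ j, 0 < pp j) (hppuu : ∀ j, pp j ≤ uu j)
    (u p : ℝ) (hu : 1 / u = ∑ j, 1 / uu j)
    (hp : 0 < p) (hpu : p ≤ u) (hpsum : ∑ j, 1 / pp j ≤ 1 / p)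
    (lam : Fin N → (Fin d → ℤ) → ℂ)
    (hlam : ∀ j, morreyNorm d (uu j) (pp j) (lam j) ≠ ⊤) :
    morreyNorm d u p (fun k => ∏ j, lam j k) ≤
      ∏ j, morreyNorm d (uu j) (pp j) (lam j) := by
  have huu : ∀ i, 0 < uu i := fun i => lt_of_lt_of_le (hpp i) (hppuu i)
  rw [morreyNorm]
  refine iSup_le fun jj => iSup_le fun m => ?_
  set X := {k : Fin d → ℤ // inDyadic d jj m k} with hX
  have hA0 : ((2 : ℝ≥0∞) ^ (jj * d)) ≠ 0 := by positivity
  have hAt : ((2 : ℝ≥0∞) ^ (jj * d)) ≠ ⊤ := by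
    exact ENNReal.pow_ne_top ENNReal.ofNat_ne_top
  set A : ℝ≥0∞ := (2 : ℝ≥0∞) ^ (jj * d) with hAdef
  set S : Fin N → ℝ≥0∞ := fun i => ∑' k : X, (‖lam i k.1‖₊ : ℝ≥0∞) ^ (pp i) with hS
  set θ : ℝ := 1 - p * ∑ i, 1 / pp i with hθdef
  have hθ : 0 ≤ θ := by
    rw [hθdef, sub_nonneg]
    calc p * ∑ i, 1 / pp i ≤ p * (1 / p) :=
          mul_le_mul_of_nonneg_left hpsum hp.le
      _ = 1 := by field_simp
  -- Hölder with N+1 factors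
  set F : Option (Fin N) → X → ℝ≥0∞ :=
    fun o k => o.elim 1 (fun i => (‖lam i k.1‖₊ : ℝ≥0∞) ^ pp i) with hF
  set e : Option (Fin N) → ℝ := fun o => o.elim θ (fun i => p * (1 / pp i)) with he
  have he_sum : ∑ o : Option (Fin N), e o = 1 := by
    rw [Fintype.sum_option]
    simp only [he, Option.elim]
    rw [← Finset.mul_sum, hθdef]
    ring
  have he_nonneg : ∀ o, 0 ≤ e o := by
    rintro (_ | i)
    · exact hθ
    · have := hpp i
      simp only [he, Option.elim]
      positivity
  have key := tsum_prod_rpow_le (X := X) Finset.univ F he_sum fun o _ => he_nonneg o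
  have hLHS : ∀ k : X, ∏ o : Option (Fin N), F o k ^ e o
      = (‖∏ i, lam i k.1‖₊ : ℝ≥0∞) ^ p := by
    intro k
    rw [Fintype.prod_option]
    simp only [hF, he, Option.elim, ENNReal.one_rpow, one_mul]
    rw [nnnorm_prod, ENNReal.coe_finset_prod, ← ENNReal.prod_rpow_of_nonneg hp.le]
    refine Finset.prod_congr rfl fun i _ => ?_
    rw [← ENNReal.rpow_mul]
    congr 1
    field_simp [(hpp i).ne']
  have hRHS : ∏ o : Option (Fin N), (∑' k : X, F o k) ^ e o
      = (∑' _ : X, (1 : ℝ≥0∞)) ^ θ * ∏ i, S i ^ (p * (1 / pp i)) := by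
    rw [Fintype.prod_option]
    simp only [hF, he, Option.elim, hS]
  rw [hRHS] at key
  have key2 : (∑' k : X, (‖∏ i, lam i k.1‖₊ : ℝ≥0∞) ^ p)
      ≤ A ^ θ * ∏ i, S i ^ (p * (1 / pp i)) := by
    calc (∑' k : X, (‖∏ i, lam i k.1‖₊ : ℝ≥0∞) ^ p)
        = ∑' k : X, ∏ o : Option (Fin N), F o k ^ e o := by
          exact (tsum_congr hLHS).symm
      _ ≤ (∑' _ : X, (1 : ℝ≥0∞)) ^ θ * ∏ i, S i ^ (p * (1 / pp i)) := key
      _ ≤ A ^ θ * ∏ i, S i ^ (p * (1 / pp i)) := by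
          gcongr
          exact tsum_one_inDyadic_le d jj m
  -- raise to power 1/p and multiply by A^(1/u - 1/p)
  have h1p : (0 : ℝ) ≤ 1 / p := by positivity
  calc A ^ (1 / u - 1 / p) * (∑' k : X, (‖∏ i, lam i k.1‖₊ : ℝ≥0∞) ^ p) ^ (1 / p)
      ≤ A ^ (1 / u - 1 / p) * (A ^ θ * ∏ i, S i ^ (p * (1 / pp i))) ^ (1 / p) :=
        mul_le_mul_right (ENNReal.rpow_le_rpow key2 h1p) _
    _ = A ^ (1 / u - 1 / p + θ * (1 / p)) * ∏ i, S i ^ (1 / pp i) := by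
        rw [ENNReal.mul_rpow_of_nonneg _ _ h1p, ← ENNReal.prod_rpow_of_nonneg (f := fun i => S i ^ (p * (1 / pp i))) h1p,
          ENNReal.rpow_add _ _ hA0 hAt, ← ENNReal.rpow_mul, ← mul_assoc]
        congr 1
        refine Finset.prod_congr rfl fun i _ => ?_
        rw [← ENNReal.rpow_mul]
        rw [mul_comm p (1 / pp i), mul_assoc, mul_one_div, div_self hp.ne', mul_one]
    _ = ∏ i, (A ^ (1 / uu i - 1 / pp i) * S i ^ (1 / pp i)) := by
        rw [Finset.prod_mul_distrib, ← ennreal_rpow_sum hA0 hAt]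
        congr 2
        rw [Finset.sum_sub_distrib, ← hu, hθdef]
        field_simp
        ring
    _ ≤ ∏ i, morreyNorm d (uu i) (pp i) (lam i) := by
        refine Finset.prod_le_prod' fun i _ => ?_
        rw [morreyNorm]
        exact le_iSup_of_le jj (le_iSup_of_le m le_rfl)
end

section
/- Let $0<p<u<\infty$. Then the Morrey sequence space $m_{u,p}(\mathbb{Z}^d)$, equipped with the (quasi-)norm $\|\cdot\,|\,m_{u,p}\|$, is not separable: it contains an uncountable family of elements any two of which are at distance bounded below by a fixed positive constant in the $m_{u,p}$ quasi-norm (in fact, there is an uncountable set of elements with pairwise distances $\ge 2^{1-j_0 d/u}$ along suitable scales, preventing the existence of a countable dense subset). -/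
open scoped ENNReal NNReal BigOperators
open Filter

/-!
Index a family by `S ⊆ ℕ`: `λ_S` is the indicator of the points `2 ^ n • e₀`, `n ∈ S`. A dyadic
cube of side `2 ^ j` contains at most `j + 1` of these points, and for `p < u` the weight
`2 ^ (j d (1/u - 1/p))` beats `(j + 1) ^ (1/p)`, so every `λ_S` lies in `m_{u,p}`. The quasi-norm
dominates the sup norm, so distinct `λ_S` are at distance `≥ 1`: each point of a dense set can be
`1/2`-close to at most one `λ_S`, which gives an injection of `Set ℕ` into that set.
-/

open Set

lemma encard_setOf_two_pow_mem_Ico_le (j : ℕ) (a : ℤ) :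
    {n : ℕ | 2 ^ j * a ≤ 2 ^ n ∧ (2 : ℤ) ^ n < 2 ^ j * (a + 1)}.encard ≤ j + 1 := by
  set s := {n : ℕ | 2 ^ j * a ≤ 2 ^ n ∧ (2 : ℤ) ^ n < 2 ^ j * (a + 1)}
  have eq_of_mem : ∀ i, j + i ∈ s → (2 : ℤ) ^ i = a := fun i ⟨h₁, h₂⟩ => by
    rw [pow_add] at h₁ h₂
    have h2j : (0 : ℤ) < 2 ^ j := by positivity
    have := le_of_mul_le_mul_left h₁ h2j
    have := lt_of_mul_lt_mul_left h₂ h2j.le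
    omega
  have h_large : {n ∈ s | j ≤ n}.encard ≤ 1 := by
    refine encard_le_one_iff.mpr fun n n' ⟨hn, hjn⟩ ⟨hn', hjn'⟩ => ?_
    obtain ⟨i, rfl⟩ := Nat.exists_eq_add_of_le hjn
    obtain ⟨i', rfl⟩ := Nat.exists_eq_add_of_le hjn'
    rw [pow_right_injective₀ (by norm_num : (0 : ℤ) < 2) (by norm_num)
      ((eq_of_mem i hn).trans (eq_of_mem i' hn').symm)]
  calc s.encard ≤ (Finset.range j : Set ℕ).encard + {n ∈ s | j ≤ n}.encard := by
        refine (encard_le_encard fun n hn => ?_).trans (encard_union_le _ _)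
        by_cases hjn : j ≤ n
        · exact Or.inr ⟨hn, hjn⟩
        · exact Or.inl (by simpa using hjn)
    _ ≤ j + 1 := by
        rw [encard_coe_eq_coe_finsetCard, Finset.card_range]
        gcongr

section

variable {d : ℕ}

lemma encard_range_single_two_pow_inter_cube_le (i : Fin d) (j : ℕ) (m : Fin d → ℤ) :
    {k ∈ range fun n : ℕ => Pi.single i ((2 : ℤ) ^ n) | inDyadic d j m k}.encard ≤ j + 1 :=
  calc _ ≤ ((fun n : ℕ => Pi.single i ((2 : ℤ) ^ n)) ''
          {n : ℕ | 2 ^ j * m i ≤ 2 ^ n ∧ (2 : ℤ) ^ n < 2 ^ j * (m i + 1)}).encard :=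
        encard_le_encard <| by
          rintro _ ⟨⟨n, rfl⟩, hk⟩
          exact ⟨n, by simpa using hk i, rfl⟩
    _ ≤ _ := encard_image_le _ _
    _ ≤ j + 1 := encard_setOf_two_pow_mem_Ico_le j (m i)

lemma exists_natCast_add_one_le_mul_two_pow_rpow {s : ℝ} (hs : 0 < s) :
    ∃ K : ℝ≥0∞, K ≠ ⊤ ∧ ∀ N : ℕ, (N + 1 : ℝ≥0∞) ≤ K * ((2 : ℝ≥0∞) ^ N) ^ s := by
  set c : ℝ := 2 ^ s
  have hc : 1 < c := Real.one_lt_rpow (by norm_num) hs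
  refine ⟨ENNReal.ofReal (1 + (c - 1)⁻¹), ENNReal.ofReal_ne_top, fun N => ?_⟩
  have bernoulli := one_add_mul_le_pow (by linarith : -2 ≤ c - 1) N
  have hcN : 1 ≤ c ^ N := one_le_pow₀ hc.le
  have key : (N + 1 : ℝ) ≤ (1 + (c - 1)⁻¹) * c ^ N := by
    rw [add_sub_cancel] at bernoulli
    have : (N : ℝ) ≤ (c - 1)⁻¹ * c ^ N := by
      rw [inv_mul_eq_div, le_div_iff₀ (by linarith)]
      linarith
    linarith
  have hpow : ((2 : ℝ≥0∞) ^ N) ^ s = ENNReal.ofReal (c ^ N) := by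
    rw [← ENNReal.rpow_natCast, ← ENNReal.rpow_mul, mul_comm, ENNReal.rpow_mul,
      ENNReal.rpow_natCast, ← ENNReal.ofReal_ofNat 2,
      ENNReal.ofReal_rpow_of_nonneg (by norm_num) hs.le, ← ENNReal.ofReal_pow (by positivity)]
  rw [hpow, ← ENNReal.ofReal_mul (by positivity)]
  calc (N + 1 : ℝ≥0∞) = ENNReal.ofReal (N + 1) := by
        rw [ENNReal.ofReal_add (by positivity) zero_le_one]; simp
    _ ≤ _ := ENNReal.ofReal_le_ofReal key

lemma enorm_le_morreyNorm (u : ℝ) {p : ℝ} (hp : 0 < p) (lam : (Fin d → ℤ) → ℂ)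
    (k : Fin d → ℤ) : ‖lam k‖ₑ ≤ morreyNorm d u p lam := by
  have hk : inDyadic d 0 k k := fun i => by simp
  calc ‖lam k‖ₑ = (‖lam k‖ₑ ^ p) ^ (1 / p) := by
        rw [← ENNReal.rpow_mul, mul_one_div_cancel hp.ne', ENNReal.rpow_one]
    _ ≤ (∑' k' : {k' // inDyadic d 0 k k'}, (‖lam k'.1‖₊ : ℝ≥0∞) ^ p) ^ (1 / p) := by
        gcongr
        exact ENNReal.le_tsum (⟨k, hk⟩ : {k' // inDyadic d 0 k k'})
    _ = ((2 : ℝ≥0∞) ^ (0 * d)) ^ (1 / u - 1 / p) *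
          (∑' k' : {k' // inDyadic d 0 k k'}, (‖lam k'.1‖₊ : ℝ≥0∞) ^ p) ^ (1 / p) := by
        simp
    _ ≤ morreyNorm d u p lam :=
        le_iSup₂ (f := fun (j : ℕ) (m : Fin d → ℤ) => ((2 : ℝ≥0∞) ^ (j * d)) ^ (1 / u - 1 / p) *
          (∑' k' : {k' // inDyadic d j m k'}, (‖lam k'.1‖₊ : ℝ≥0∞) ^ p) ^ (1 / p)) 0 k

lemma tsum_cube_indicator_one {p : ℝ} (hp : 0 < p) (A : Set (Fin d → ℤ)) (j : ℕ)
    (m : Fin d → ℤ) :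
    ∑' k : {k // inDyadic d j m k}, (‖A.indicator (1 : (Fin d → ℤ) → ℂ) k.1‖₊ : ℝ≥0∞) ^ p =
      {k ∈ A | inDyadic d j m k}.encard := by
  have h_ind : ∀ k, (‖A.indicator (1 : (Fin d → ℤ) → ℂ) k‖₊ : ℝ≥0∞) ^ p = A.indicator 1 k :=
    fun k => by by_cases hk : k ∈ A <;> simp [hk, ENNReal.zero_rpow_of_pos hp]
  simp_rw [h_ind]
  calc _ = ∑' k, {k | inDyadic d j m k}.indicator (A.indicator 1) k := tsum_subtype _ _
    _ = ∑' k, {k ∈ A | inDyadic d j m k}.indicator 1 k := by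
        congr 1
        ext k
        by_cases hk : k ∈ A <;> by_cases hjk : inDyadic d j m k <;> simp [hk, hjk]
    _ = _ := by rw [← tsum_subtype]; exact ENNReal.tsum_set_one _

lemma morreyNorm_indicator_one_ne_top (hd : 0 < d) {u p : ℝ} (hp : 0 < p) (hpu : p < u)
    {A : Set (Fin d → ℤ)} (hA : ∀ j m, {k ∈ A | inDyadic d j m k}.encard ≤ j + 1) :
    morreyNorm d u p (A.indicator 1) ≠ ⊤ := by
  have hs : 0 < 1 - p / u := by rw [sub_pos, div_lt_one (hp.trans hpu)]; exact hpu
  obtain ⟨K, hK, hgrowth⟩ := exists_natCast_add_one_le_mul_two_pow_rpow hs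
  refine ne_top_of_le_ne_top (ENNReal.rpow_ne_top_of_nonneg (y := 1 / p) (by positivity) hK) ?_
  refine iSup₂_le fun j m => ?_
  set w : ℝ≥0∞ := (2 : ℝ≥0∞) ^ (j * d)
  have hw₀ : w ≠ 0 := by positivity
  have hw : w ≠ ⊤ := ENNReal.pow_ne_top ENNReal.ofNat_ne_top
  have h_count : ({k ∈ A | inDyadic d j m k}.encard : ℝ≥0∞) ≤ K * w ^ (1 - p / u) := by
    refine le_trans ?_ (hgrowth (j * d))
    calc ({k ∈ A | inDyadic d j m k}.encard : ℝ≥0∞) ≤ ((j + 1 : ℕ∞) : ℝ≥0∞) :=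
          ENat.toENNReal_le.mpr (hA j m)
      _ ≤ ((j * d : ℕ) : ℝ≥0∞) + 1 := by
          push_cast
          gcongr
          exact le_mul_of_one_le_right' (by exact_mod_cast hd)
  calc w ^ (1 / u - 1 / p) *
        (∑' k : {k // inDyadic d j m k}, (‖A.indicator 1 k.1‖₊ : ℝ≥0∞) ^ p) ^ (1 / p)
      ≤ w ^ (1 / u - 1 / p) * (K * w ^ (1 - p / u)) ^ (1 / p) := by
        rw [tsum_cube_indicator_one hp]
        gcongr
    _ = K ^ (1 / p) * w ^ (1 / u - 1 / p + (1 - p / u) * (1 / p)) := by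
        rw [ENNReal.mul_rpow_of_nonneg _ _ (by positivity), ← ENNReal.rpow_mul,
          ENNReal.rpow_add _ _ hw₀ hw]
        ring
    _ = K ^ (1 / p) := by
        rw [show 1 / u - 1 / p + (1 - p / u) * (1 / p) = 0 by field_simp; ring,
          ENNReal.rpow_zero, mul_one]

lemma eq_of_morreyNorm_indicator_one_sub_lt (u : ℝ) {p : ℝ} (hp : 0 < p)
    {A B : Set (Fin d → ℤ)} {mu : (Fin d → ℤ) → ℂ}
    (hA : morreyNorm d u p (A.indicator 1 - mu) < 1 / 2)
    (hB : morreyNorm d u p (B.indicator 1 - mu) < 1 / 2) : A = B := by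
  ext k
  by_contra hk
  have h_apart : 1 ≤ edist (A.indicator (1 : (Fin d → ℤ) → ℂ) k) (B.indicator 1 k) := by
    by_cases hkA : k ∈ A <;> by_cases hkB : k ∈ B <;> simp_all
  have h_near : ∀ C : Set (Fin d → ℤ), morreyNorm d u p (C.indicator 1 - mu) < 1 / 2 →
      edist (C.indicator 1 k) (mu k) < 1 / 2 := fun C hC => by
    rw [edist_eq_enorm_sub]
    exact (enorm_le_morreyNorm u hp _ k).trans_lt hC
  have := (edist_triangle_right _ _ (mu k)).trans_lt
    (ENNReal.add_lt_add (h_near A hA) (h_near B hB))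
  rw [ENNReal.add_halves] at this
  exact h_apart.not_gt this

end

theorem morrey_not_separable (d : ℕ) (hd : 0 < d) (u p : ℝ) (hp : 0 < p) (hpu : p < u) :
    ¬ ∃ D : Set ((Fin d → ℤ) → ℂ), D.Countable ∧
        ∀ lam : (Fin d → ℤ) → ℂ, morreyNorm d u p lam ≠ ⊤ →
          ∀ ε : ℝ≥0∞, 0 < ε → ∃ mu ∈ D,
            morreyNorm d u p mu ≠ ⊤ ∧ morreyNorm d u p (lam - mu) < ε := by
  rintro ⟨D, hD, hdense⟩
  set pt : ℕ → Fin d → ℤ := fun n => Pi.single ⟨0, hd⟩ ((2 : ℤ) ^ n)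
  have hpt : Function.Injective pt := (Pi.single_injective _).comp
    (pow_right_injective₀ (by norm_num) (by norm_num))
  have h_mem : ∀ S : Set ℕ, morreyNorm d u p ((pt '' S).indicator 1) ≠ ⊤ := fun S =>
    morreyNorm_indicator_one_ne_top hd hp hpu fun j m =>
      (encard_le_encard <| by rintro _ ⟨⟨n, -, rfl⟩, hk⟩; exact ⟨⟨n, rfl⟩, hk⟩).trans
        (encard_range_single_two_pow_inter_cube_le _ j m)
  choose g hgD hg using fun S => hdense _ (h_mem S) (1 / 2) (by norm_num)
  have hg_inj : Function.Injective fun S => (⟨g S, hgD S⟩ : D) := fun S T hST => by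
    have hgST : g S = g T := congrArg Subtype.val hST
    refine image_injective.mpr hpt (eq_of_morreyNorm_indicator_one_sub_lt u hp (hg S).2 ?_)
    exact hgST ▸ (hg T).2
  have := hD.to_subtype
  obtain ⟨f, hf⟩ := exists_injective_nat D
  exact Function.cantor_injective _ (hf.comp hg_inj)
end

section
/- Let $1\le p<u<\infty$, $1/p+1/p'=1$, $1/u+1/u'=1$, and let $j\in\mathbb{N}_0$. For a complex sequence $\lambda=\{\lambda_k\}_{k\in\mathbb{Z}^d}$ set $\|\lambda\|^{(j)}_{u,p} = 2^{jd(1/p-1/u)}\sum_{m\in\mathbb{Z}^d}\big(\sum_{k:\,Q_{0,k}\subset Q_{-j,m}}|\lambda_k|^{p'}\big)^{1/p'}$. Then: (a) $2^{-jd/u}\,\|\lambda\,|\,\ell_1\| \le \|\lambda\|^{(j)}_{u,p} \le 2^{jd(1/p-1/u)}\,\|\lambda\,|\,\ell_1\|$, so the space $\mathcal{X}^{(j)}_{u,p}(\mathbb{Z}^d)$ of sequences with $\|\lambda\|^{(j)}_{u,p}<\infty$ coincides with $\ell_1(\mathbb{Z}^d)$ with equivalent norms; (b) $\|\lambda\,|\,\ell_{u'}\|\le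 \|\lambda\|^{(j)}_{u,p}$ for all $\lambda$, and the operator norm of the identity embedding $\mathcal{X}^{(j)}_{u,p}(\mathbb{Z}^d)\hookrightarrow \ell_{u'}(\mathbb{Z}^d)$ equals exactly $1$. -/
/-!
Cut `ℤ^d` into the dyadic cubes `Q_{-j,m}`, each containing `N = 2^{jd}` lattice points. On one
cube the `ℓ_r` norms compare by `‖x‖_s ≤ ‖x‖_1` (`s ≥ 1`) and by the finite Hölder inequality
`‖x‖_r ≤ N^{1/r - 1/s} ‖x‖_s` (`r ≤ s`); summing over the cubes gives (a). For (b) bound the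
`ℓ_{u'}` norm by the sum of the `ℓ_{u'}` norms over the cubes and apply Hölder in each cube, using
`1/u' - 1/p' = 1/p - 1/u`. The indicator of one cube gives equality in (b), so the embedding
constant is `1`.
-/

open scoped ENNReal NNReal BigOperators
open Filter

namespace ENNReal

theorem tsum_rpow_le_rpow_tsum {ι : Type*} (a : ι → ℝ≥0∞) {q : ℝ} (hq : 1 ≤ q) :
    ∑' i, a i ^ q ≤ (∑' i, a i) ^ q := by
  have hsplit : ∀ x : ℝ≥0∞, x ^ q = x ^ (q - 1) * x := fun x => by
    simpa using rpow_add_of_nonneg (x := x) (q - 1) 1 (by linarith) zero_le_one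
  calc ∑' i, a i ^ q ≤ ∑' i, (∑' i, a i) ^ (q - 1) * a i := by
        refine ENNReal.tsum_le_tsum fun i => ?_
        rw [hsplit]
        gcongr
        exact ENNReal.le_tsum i
    _ = (∑' i, a i) ^ q := by rw [ENNReal.tsum_mul_left, ← hsplit]

theorem rpow_tsum_rpow_le_tsum {ι : Type*} (a : ι → ℝ≥0∞) {q : ℝ} (hq : 1 ≤ q) :
    (∑' i, a i ^ q) ^ (1 / q) ≤ ∑' i, a i := by
  rw [one_div, rpow_inv_le_iff (by linarith)]
  exact tsum_rpow_le_rpow_tsum a hq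

theorem tsum_rpow_rpow_le_card_rpow_mul {ι : Type*} [Fintype ι] (a : ι → ℝ≥0∞) {r s : ℝ}
    (hr : 0 < r) (hrs : r ≤ s) :
    (∑' i, a i ^ r) ^ (1 / r) ≤
      (Fintype.card ι : ℝ≥0∞) ^ (1 / r - 1 / s) * (∑' i, a i ^ s) ^ (1 / s) := by
  have hs : 0 < s := hr.trans_le hrs
  have hpow := rpow_sum_le_const_mul_sum_rpow Finset.univ (fun i => a i ^ r)
    ((one_le_div hr).2 hrs)
  simp only [← rpow_mul, mul_div_cancel₀ _ hr.ne', Finset.card_univ] at hpow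
  rw [← rpow_le_rpow_iff hs, mul_rpow_of_nonneg _ _ hs.le, ← rpow_mul, ← rpow_mul, ← rpow_mul,
    one_div_mul_cancel hs.ne', rpow_one, tsum_fintype, tsum_fintype]
  convert hpow using 3 <;> field_simp

end ENNReal

section DyadicCubes

variable {d j : ℕ}

theorem inDyadic_iff_eq_ediv {m k : Fin d → ℤ} :
    inDyadic d j m k ↔ m = fun i => k i / 2 ^ j := by
  have h2j : (0 : ℤ) < 2 ^ j := by positivity
  simp only [inDyadic, funext_iff]
  refine forall_congr' fun i => ?_
  rw [le_antisymm_iff, Int.le_ediv_iff_mul_le h2j, Int.ediv_le_iff_le_mul h2j]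
  constructor <;> rintro ⟨h1, h2⟩ <;> constructor <;> linarith

noncomputable def dyadicCube (d j : ℕ) (m : Fin d → ℤ) : Finset (Fin d → ℤ) :=
  Fintype.piFinset fun i => Finset.Ico (2 ^ j * m i) (2 ^ j * (m i + 1))

theorem mem_dyadicCube {m k : Fin d → ℤ} : k ∈ dyadicCube d j m ↔ inDyadic d j m k := by
  simp [dyadicCube, inDyadic]

noncomputable instance (d j : ℕ) (m : Fin d → ℤ) : Fintype {k : Fin d → ℤ // inDyadic d j m k} :=
  Fintype.subtype (dyadicCube d j m) fun _ => mem_dyadicCube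

theorem card_inDyadic (m : Fin d → ℤ) :
    Fintype.card {k : Fin d → ℤ // inDyadic d j m k} = 2 ^ (j * d) := by
  rw [Fintype.card_of_subtype _ fun _ => mem_dyadicCube, dyadicCube, Fintype.card_piFinset]
  simp [Int.card_Ico, mul_add, pow_mul]
  norm_cast

theorem tsum_eq_tsum_tsum_inDyadic (j : ℕ) (g : (Fin d → ℤ) → ℝ≥0∞) :
    ∑' k, g k = ∑' m, ∑' k : {k : Fin d → ℤ // inDyadic d j m k}, g k := by
  let e : (Σ m, {k : Fin d → ℤ // inDyadic d j m k}) ≃ (Fin d → ℤ) :=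
    (Equiv.sigmaCongrRight fun m => Equiv.subtypeEquivRight fun k => by
        rw [inDyadic_iff_eq_ediv, eq_comm]).trans
      (Equiv.sigmaFiberEquiv fun k i => k i / 2 ^ j)
  rw [← e.tsum_eq, ENNReal.tsum_sigma']
  rfl

end DyadicCubes

noncomputable def cubeLpNorm (d j : ℕ) (r : ℝ) (lam : (Fin d → ℤ) → ℂ) (m : Fin d → ℤ) : ℝ≥0∞ :=
  (∑' k : {k : Fin d → ℤ // inDyadic d j m k}, (‖lam k.1‖₊ : ℝ≥0∞) ^ r) ^ (1 / r)

section CubeLpNorm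

variable {d : ℕ} {r : ℝ} {lam : (Fin d → ℤ) → ℂ}

theorem lpNorm_eq_tsum_cubeLpNorm (j : ℕ) (hr : 0 < r) :
    lpNorm d r lam = (∑' m, cubeLpNorm d j r lam m ^ r) ^ (1 / r) := by
  simp only [lpNorm, cubeLpNorm, ← ENNReal.rpow_mul, one_div_mul_cancel hr.ne', ENNReal.rpow_one]
  rw [tsum_eq_tsum_tsum_inDyadic j]

theorem lpNorm_one_eq_tsum_cubeLpNorm (j : ℕ) :
    lpNorm d 1 lam = ∑' m, cubeLpNorm d j 1 lam m := by
  simpa using lpNorm_eq_tsum_cubeLpNorm (lam := lam) j one_pos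

theorem cubeLpNorm_le_cubeLpNorm_one {j : ℕ} (hr : 1 ≤ r) (m : Fin d → ℤ) :
    cubeLpNorm d j r lam m ≤ cubeLpNorm d j 1 lam m := by
  simpa only [cubeLpNorm, div_one, ENNReal.rpow_one] using
    ENNReal.rpow_tsum_rpow_le_tsum (fun k : {k // inDyadic d j m k} => (‖lam k.1‖₊ : ℝ≥0∞)) hr

theorem cubeLpNorm_le_rpow_mul_cubeLpNorm {j : ℕ} {s : ℝ} (hr : 0 < r) (hrs : r ≤ s)
    (m : Fin d → ℤ) :
    cubeLpNorm d j r lam m ≤ ((2 : ℝ≥0∞) ^ (j * d)) ^ (1 / r - 1 / s) * cubeLpNorm d j s lam m := by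
  simpa only [cubeLpNorm, card_inDyadic, Nat.cast_pow, Nat.cast_ofNat] using
    ENNReal.tsum_rpow_rpow_le_card_rpow_mul
      (fun k : {k // inDyadic d j m k} => (‖lam k.1‖₊ : ℝ≥0∞)) hr hrs

end CubeLpNorm

section XjNorm

variable {d : ℕ} {u p p' : ℝ} {j : ℕ} {lam : (Fin d → ℤ) → ℂ}

theorem XjNorm_eq_rpow_mul_tsum_cubeLpNorm :
    XjNorm d u p p' j lam =
      ((2 : ℝ≥0∞) ^ (j * d)) ^ (1 / p - 1 / u) * ∑' m, cubeLpNorm d j p' lam m :=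
  rfl

theorem rpow_neg_mul_lpNorm_one_le_XjNorm (hp' : 1 ≤ p') (hpp' : 1 / p + 1 / p' = 1) :
    ((2 : ℝ≥0∞) ^ (j * d)) ^ (-(1 / u)) * lpNorm d 1 lam ≤ XjNorm d u p p' j lam := by
  have hN0 : (2 : ℝ≥0∞) ^ (j * d) ≠ 0 := by positivity
  have hNtop : (2 : ℝ≥0∞) ^ (j * d) ≠ ⊤ := by finiteness
  have hcube (m : Fin d → ℤ) :
      cubeLpNorm d j 1 lam m ≤ ((2 : ℝ≥0∞) ^ (j * d)) ^ (1 / p) * cubeLpNorm d j p' lam m := by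
    have h := cubeLpNorm_le_rpow_mul_cubeLpNorm (lam := lam) (j := j) one_pos hp' m
    rwa [div_one, show 1 - 1 / p' = 1 / p by linarith] at h
  calc ((2 : ℝ≥0∞) ^ (j * d)) ^ (-(1 / u)) * lpNorm d 1 lam
      ≤ ((2 : ℝ≥0∞) ^ (j * d)) ^ (-(1 / u)) *
          ∑' m, ((2 : ℝ≥0∞) ^ (j * d)) ^ (1 / p) * cubeLpNorm d j p' lam m := by
        rw [lpNorm_one_eq_tsum_cubeLpNorm j]
        gcongr with m
        exact hcube m
    _ = XjNorm d u p p' j lam := by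
        rw [ENNReal.tsum_mul_left, ← mul_assoc, ← ENNReal.rpow_add _ _ hN0 hNtop, neg_add_eq_sub,
          XjNorm_eq_rpow_mul_tsum_cubeLpNorm]

theorem XjNorm_le_rpow_mul_lpNorm_one (hp' : 1 ≤ p') :
    XjNorm d u p p' j lam ≤ ((2 : ℝ≥0∞) ^ (j * d)) ^ (1 / p - 1 / u) * lpNorm d 1 lam := by
  rw [lpNorm_one_eq_tsum_cubeLpNorm j, XjNorm_eq_rpow_mul_tsum_cubeLpNorm]
  gcongr with m
  exact cubeLpNorm_le_cubeLpNorm_one hp' m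

theorem lpNorm_le_XjNorm {u' : ℝ} (hu'1 : 1 ≤ u') (hu'p' : u' ≤ p')
    (hexp : 1 / u' - 1 / p' = 1 / p - 1 / u) :
    lpNorm d u' lam ≤ XjNorm d u p p' j lam := by
  calc lpNorm d u' lam = (∑' m, cubeLpNorm d j u' lam m ^ u') ^ (1 / u') :=
        lpNorm_eq_tsum_cubeLpNorm j (by linarith)
    _ ≤ ∑' m, cubeLpNorm d j u' lam m := ENNReal.rpow_tsum_rpow_le_tsum _ hu'1
    _ ≤ ∑' m, ((2 : ℝ≥0∞) ^ (j * d)) ^ (1 / p - 1 / u) * cubeLpNorm d j p' lam m :=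
        ENNReal.tsum_le_tsum fun m => hexp ▸ cubeLpNorm_le_rpow_mul_cubeLpNorm (by linarith) hu'p' m
    _ = XjNorm d u p p' j lam := ENNReal.tsum_mul_left

end XjNorm

section CubeIndicator

variable {d j : ℕ}

noncomputable def cubeIndicator (d j : ℕ) : (Fin d → ℤ) → ℂ :=
  Set.indicator {k | inDyadic d j 0 k} 1

theorem tsum_cubeIndicator_rpow {r : ℝ} (hr : 0 < r) (m : Fin d → ℤ) :
    ∑' k : {k : Fin d → ℤ // inDyadic d j m k}, (‖cubeIndicator d j k.1‖₊ : ℝ≥0∞) ^ r =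
      if m = 0 then (2 : ℝ≥0∞) ^ (j * d) else 0 := by
  split_ifs with hm
  · subst hm
    simp [cubeIndicator, Set.indicator_of_mem, tsum_fintype, card_inDyadic]
  · have hk (k : {k : Fin d → ℤ // inDyadic d j m k}) : ¬ inDyadic d j 0 k.1 := fun h0 =>
      hm ((inDyadic_iff_eq_ediv.1 k.2).trans (inDyadic_iff_eq_ediv.1 h0).symm)
    simp [cubeIndicator, hk, ENNReal.zero_rpow_of_pos hr]

theorem lpNorm_cubeIndicator {r : ℝ} (hr : 0 < r) :
    lpNorm d r (cubeIndicator d j) = ((2 : ℝ≥0∞) ^ (j * d)) ^ (1 / r) := by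
  rw [lpNorm, tsum_eq_tsum_tsum_inDyadic j]
  simp only [tsum_cubeIndicator_rpow hr, tsum_ite_eq]

theorem XjNorm_cubeIndicator {u p p' : ℝ} (hp' : 0 < p') :
    XjNorm d u p p' j (cubeIndicator d j) =
      ((2 : ℝ≥0∞) ^ (j * d)) ^ (1 / p - 1 / u) * ((2 : ℝ≥0∞) ^ (j * d)) ^ (1 / p') := by
  have hzero : (0 : ℝ≥0∞) ^ (1 / p') = 0 := ENNReal.zero_rpow_of_pos (by positivity)
  simp only [XjNorm, tsum_cubeIndicator_rpow hp', apply_ite (· ^ (1 / p')), hzero, tsum_ite_eq]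

theorem one_le_of_forall_lpNorm_le_mul_XjNorm {u p p' u' : ℝ} (hp' : 0 < p') (hu' : 0 < u')
    (hexp : 1 / p - 1 / u + 1 / p' = 1 / u') {C : ℝ≥0∞}
    (hC : ∀ lam, lpNorm d u' lam ≤ C * XjNorm d u p p' j lam) : 1 ≤ C := by
  have hN0 : (2 : ℝ≥0∞) ^ (j * d) ≠ 0 := by positivity
  have hNtop : (2 : ℝ≥0∞) ^ (j * d) ≠ ⊤ := by finiteness
  have h := hC (cubeIndicator d j)
  rw [lpNorm_cubeIndicator hu', XjNorm_cubeIndicator hp', ← ENNReal.rpow_add _ _ hN0 hNtop,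
    hexp] at h
  have hpos : ((2 : ℝ≥0∞) ^ (j * d)) ^ (1 / u') ≠ 0 := by positivity
  have hfin : ((2 : ℝ≥0∞) ^ (j * d)) ^ (1 / u') ≠ ⊤ := by finiteness
  exact (ENNReal.mul_le_mul_iff_left hpos hfin).1 (by rwa [one_mul])

end CubeIndicator

theorem Xj_eq_l1_and_embeds_lu' (d : ℕ) (u p p' u' : ℝ)
    (hp : 1 ≤ p) (hpu : p < u) (hp'pos : 0 < p') (hp' : 1 / p + 1 / p' = 1)
    (hu' : 1 / u + 1 / u' = 1) (j : ℕ) :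
    (∀ lam : (Fin d → ℤ) → ℂ,
        ((2 : ℝ≥0∞) ^ (j * d)) ^ (-(1 / u)) * lpNorm d 1 lam ≤ XjNorm d u p p' j lam ∧
        XjNorm d u p p' j lam ≤ ((2 : ℝ≥0∞) ^ (j * d)) ^ (1 / p - 1 / u) * lpNorm d 1 lam) ∧
    (∀ lam : (Fin d → ℤ) → ℂ, lpNorm d u' lam ≤ XjNorm d u p p' j lam) ∧
    (∀ C : ℝ≥0∞, (∀ lam : (Fin d → ℤ) → ℂ, lpNorm d u' lam ≤ C * XjNorm d u p p' j lam) →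
      1 ≤ C) := by
  have hp0 : 0 < p := by linarith
  have hu0 : 0 < u := by linarith
  have hinv_p : 0 < 1 / p := by positivity
  have hinv_u : 0 < 1 / u := by positivity
  have hinv_p' : 0 < 1 / p' := by positivity
  have hinv_pu : 1 / u < 1 / p := one_div_lt_one_div_of_lt hp0 hpu
  have hu'pos : 0 < u' := one_div_pos.1 (by linarith)
  have hp'1 : 1 ≤ p' := (div_le_one hp'pos).1 (by linarith)
  have hu'1 : 1 ≤ u' := (div_le_one hu'pos).1 (by linarith)
  have hu'p' : u' ≤ p' := (one_div_le_one_div hp'pos hu'pos).1 (by linarith)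
  refine ⟨fun lam => ⟨rpow_neg_mul_lpNorm_one_le_XjNorm hp'1 hp',
    XjNorm_le_rpow_mul_lpNorm_one hp'1⟩, fun lam => lpNorm_le_XjNorm hu'1 hu'p' (by linarith),
    fun C hC => one_le_of_forall_lpNorm_le_mul_XjNorm hp'pos hu'pos (by linarith) hC⟩
end
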